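/- The metric with nonzero components G₁₂=G₂₁=v e^{-y₁}y₁, G₁₃=G₃₁=v e^{-y₁}, G₂₂=q e^{-2y₁} (q,v nonzero constants) on ℝ³ is flat: its Riemann curvature tensor vanishes identically. -/

import Mathlib

set_option maxHeartbeats 1000000


open Real Matrix

noncomputable section

/-- Partial derivative of a scalar function on ℝ³ in the i-th coordinate direction. -/
def pd (i : Fin 3) (f : (Fin 3 → ℝ) → ℝ) (y : Fin 3 → ℝ) : ℝ :=
  fderiv ℝ f y (Pi.single i 1)

/-- Christoffel symbols Γ^k_{ij} of the Levi-Civita connection of the metric g. -/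
def christoffel (g : (Fin 3 → ℝ) → Matrix (Fin 3) (Fin 3) ℝ) (k i j : Fin 3)
    (y : Fin 3 → ℝ) : ℝ :=
  (1/2) * ∑ l, (g y)⁻¹ k l *
    (pd i (fun z => g z l j) y + pd j (fun z => g z l i) y - pd l (fun z => g z i j) y)

/-- Riemann curvature tensor R^l_{kij}. -/
def riemann (g : (Fin 3 → ℝ) → Matrix (Fin 3) (Fin 3) ℝ) (l k i j : Fin 3)
    (y : Fin 3 → ℝ) : ℝ :=
  pd i (christoffel g l j k) y - pd j (christoffel g l i k) y
  + ∑ m, (christoffel g l i m y * christoffel g m j k y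
        - christoffel g l j m y * christoffel g m i k y)

/-- Ricci tensor R_{ij} = R^k_{ikj}. -/
def ricci (g : (Fin 3 → ℝ) → Matrix (Fin 3) (Fin 3) ℝ) (i j : Fin 3)
    (y : Fin 3 → ℝ) : ℝ :=
  ∑ k, riemann g k i k j y

/-- Scalar (Gauss) curvature R = g^{ij} R_{ij}. -/
def scalarCurv (g : (Fin 3 → ℝ) → Matrix (Fin 3) (Fin 3) ℝ) (y : Fin 3 → ℝ) : ℝ :=
  ∑ i, ∑ j, (g y)⁻¹ i j * ricci g i j y

/-- Covariant Hessian ∇ᵢ∇ⱼΦ = ∂ᵢ∂ⱼΦ - Γ^k_{ij} ∂ₖΦ. -/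
def covHess (g : (Fin 3 → ℝ) → Matrix (Fin 3) (Fin 3) ℝ) (Φ : (Fin 3 → ℝ) → ℝ)
    (i j : Fin 3) (y : Fin 3 → ℝ) : ℝ :=
  pd i (pd j Φ) y - ∑ k, christoffel g k i j y * pd k Φ y

/-- The (4|1) flat metric. -/
def G41 (q v : ℝ) (y : Fin 3 → ℝ) : Matrix (Fin 3) (Fin 3) ℝ :=
  !![0, v * exp (-(y 0)) * y 0, v * exp (-(y 0));
     v * exp (-(y 0)) * y 0, q * exp (-2 * y 0), 0;
     v * exp (-(y 0)), 0, 0]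

lemma pd_comp (F : ℝ → ℝ) (F' : ℝ) (i : Fin 3) (y : Fin 3 → ℝ)
    (hF : HasDerivAt F F' (y 0)) :
    pd i (fun z => F (z 0)) y = F' * (Pi.single i 1 : Fin 3 → ℝ) 0 := by
  have h1 : HasFDerivAt (fun z : Fin 3 → ℝ => z 0)
      (ContinuousLinearMap.proj 0 : (Fin 3 → ℝ) →L[ℝ] ℝ) y :=
    (ContinuousLinearMap.proj 0 : (Fin 3 → ℝ) →L[ℝ] ℝ).hasFDerivAt
  have h2 := hF.hasFDerivAt.comp y h1
  have h3 : HasFDerivAt (fun z : Fin 3 → ℝ => F (z 0))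
      ((ContinuousLinearMap.smulRight 1 F').comp
        (ContinuousLinearMap.proj 0 : (Fin 3 → ℝ) →L[ℝ] ℝ)) y := h2
  unfold pd
  rw [h3.fderiv]
  simp [mul_comm]

-- inverse of the metric
lemma G41_inv (q v : ℝ) (hq : q ≠ 0) (hv : v ≠ 0) (y : Fin 3 → ℝ) :
    (G41 q v y)⁻¹ =
      !![0, 0, exp (y 0) / v;
         0, exp (2 * y 0) / q, -(y 0 * exp (2 * y 0)) / q;
         exp (y 0) / v, -(y 0 * exp (2 * y 0)) / q, y 0 ^ 2 * exp (2 * y 0) / q] := by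
  apply Matrix.inv_eq_right_inv
  have he : exp (-(y 0)) = (exp (y 0))⁻¹ := by rw [Real.exp_neg]
  have he2 : exp (-2 * y 0) = (exp (y 0))⁻¹ * (exp (y 0))⁻¹ := by
    rw [← Real.exp_neg, ← Real.exp_add]; ring_nf
  have he2' : exp (-(y 0 * 2)) = (exp (y 0))⁻¹ * (exp (y 0))⁻¹ := by
    rw [← Real.exp_neg, ← Real.exp_add]; ring_nf
  have he2'' : exp (-(2 * y 0)) = (exp (y 0))⁻¹ * (exp (y 0))⁻¹ := by
    rw [← Real.exp_neg, ← Real.exp_add]; ring_nf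
  have he3 : exp (2 * y 0) = exp (y 0) * exp (y 0) := by
    rw [← Real.exp_add]; ring_nf
  have hE := Real.exp_ne_zero (y 0)
  ext i j
  fin_cases i <;> fin_cases j <;>
    simp [G41, Matrix.mul_apply, Fin.sum_univ_three, he, he2, he2', he2'', he3] <;>
    field_simp <;> ring

/-- Closed form of the Christoffel symbols. -/
def Gam (q v : ℝ) (k i j : Fin 3) (x : ℝ) : ℝ :=
  if k = 0 ∧ i = 0 ∧ j = 0 then -1
  else if k = 1 ∧ i = 0 ∧ j = 0 then v / q * exp x
  else if k = 2 ∧ i = 0 ∧ j = 0 then -(v / q * x * exp x)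
  else if k = 1 ∧ (i = 0 ∧ j = 1 ∨ i = 1 ∧ j = 0) then -1
  else if k = 2 ∧ (i = 0 ∧ j = 1 ∨ i = 1 ∧ j = 0) then x
  else if k = 2 ∧ i = 1 ∧ j = 1 then q / v * exp (-x)
  else 0

lemma pd_const (c : ℝ) (i : Fin 3) (y : Fin 3 → ℝ) : pd i (fun _ => c) y = 0 := by
  simp [pd]

lemma pd_a (c : ℝ) (i : Fin 3) (y : Fin 3 → ℝ) :
    pd i (fun z => c * exp (-(z 0)) * z 0) y
      = c * exp (-(y 0)) * (1 - y 0) * (Pi.single i 1 : Fin 3 → ℝ) 0 := by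
  apply pd_comp (F := fun x => c * exp (-x) * x)
  have h1 : HasDerivAt (fun x : ℝ => -x) (-1) (y 0) := (hasDerivAt_id _).neg
  have h3 := ((h1.exp).const_mul c).mul (hasDerivAt_id (y 0))
  exact h3.congr_deriv (by simp only [id]; ring)

lemma pd_b (c : ℝ) (i : Fin 3) (y : Fin 3 → ℝ) :
    pd i (fun z => c * exp (-(z 0))) y
      = -(c * exp (-(y 0))) * (Pi.single i 1 : Fin 3 → ℝ) 0 := by
  apply pd_comp (F := fun x => c * exp (-x))
  have h1 : HasDerivAt (fun x : ℝ => -x) (-1) (y 0) := (hasDerivAt_id _).neg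
  have h3 := (h1.exp).const_mul c
  exact h3.congr_deriv (by ring)

lemma pd_c (c : ℝ) (i : Fin 3) (y : Fin 3 → ℝ) :
    pd i (fun z => c * exp (-2 * z 0)) y
      = -2 * (c * exp (-2 * y 0)) * (Pi.single i 1 : Fin 3 → ℝ) 0 := by
  apply pd_comp (F := fun x => c * exp (-2 * x))
  have h1 : HasDerivAt (fun x : ℝ => -2 * x) (-2) (y 0) := by
    simpa using (hasDerivAt_id (y 0)).const_mul (-2)
  have h3 := (h1.exp).const_mul c
  exact h3.congr_deriv (by ring)

lemma pd_x (i : Fin 3) (y : Fin 3 → ℝ) :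
    pd i (fun z => z 0) y = (Pi.single i 1 : Fin 3 → ℝ) 0 := by
  have := pd_comp (F := fun x => x) (F' := 1) i y (hasDerivAt_id _)
  simpa using this

lemma pd_e (c : ℝ) (i : Fin 3) (y : Fin 3 → ℝ) :
    pd i (fun z => c * exp (z 0)) y = c * exp (y 0) * (Pi.single i 1 : Fin 3 → ℝ) 0 := by
  apply pd_comp (F := fun x => c * exp x)
  exact (Real.hasDerivAt_exp _).const_mul c

lemma pd_xe (c : ℝ) (i : Fin 3) (y : Fin 3 → ℝ) :
    pd i (fun z => -(c * z 0 * exp (z 0))) y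
      = -(c * exp (y 0) + c * y 0 * exp (y 0)) * (Pi.single i 1 : Fin 3 → ℝ) 0 := by
  apply pd_comp (F := fun x => -(c * x * exp x))
  have h3 := (((hasDerivAt_id (y 0)).const_mul c).mul (Real.hasDerivAt_exp (y 0))).neg
  exact h3.congr_deriv (by simp only [id]; ring)

lemma pd_c' (c : ℝ) (i : Fin 3) (y : Fin 3 → ℝ) :
    pd i (fun z => c * exp (-(2 * z 0))) y
      = -(2 * (c * exp (-(2 * y 0))) * (Pi.single i 1 : Fin 3 → ℝ) 0) := by
  have h := pd_c c i y
  have e1 : (fun z : Fin 3 → ℝ => c * exp (-(2 * z 0))) = fun z => c * exp (-2 * z 0) := by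
    funext z; ring_nf
  rw [e1, h]; ring_nf

lemma pdG (q v : ℝ) (ii l j : Fin 3) (y : Fin 3 → ℝ) :
    pd ii (fun z => G41 q v z l j) y =
      (!![0, v * exp (-(y 0)) * (1 - y 0), -(v * exp (-(y 0)));
          v * exp (-(y 0)) * (1 - y 0), -2 * (q * exp (-2 * y 0)), 0;
          -(v * exp (-(y 0))), 0, 0] : Matrix (Fin 3) (Fin 3) ℝ) l j
        * (Pi.single ii 1 : Fin 3 → ℝ) 0 := by
  fin_cases l <;> fin_cases j <;>
    simp [G41, Matrix.vecHead, Matrix.vecTail, pd_a, pd_b, pd_c, pd_c', pd_const]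

lemma christoffel_eq (q v : ℝ) (hq : q ≠ 0) (hv : v ≠ 0) (k i j : Fin 3) (y : Fin 3 → ℝ) :
    christoffel (G41 q v) k i j y = Gam q v k i j (y 0) := by
  have hE : ∀ t : ℝ, exp t ≠ 0 := Real.exp_ne_zero
  have he : ∀ t : ℝ, exp (-t) = (exp t)⁻¹ := fun t => Real.exp_neg t
  have he2 : ∀ t : ℝ, exp (-2 * t) = (exp t)⁻¹ * (exp t)⁻¹ := fun t => by
    rw [← Real.exp_neg, ← Real.exp_add]; ring_nf
  have he3 : ∀ t : ℝ, exp (2 * t) = exp t * exp t := fun t => by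
    rw [← Real.exp_add]; ring_nf
  have hkey : ∀ t : ℝ, exp (-(t * 2)) = (exp t)⁻¹ * (exp t)⁻¹ := fun t => by
    rw [← Real.exp_neg, ← Real.exp_add]; ring_nf
  unfold christoffel
  rw [G41_inv q v hq hv]
  simp only [Fin.sum_univ_three, pdG q v]
  fin_cases k <;> fin_cases i <;> fin_cases j <;>
    simp [Gam, Pi.single_apply, Matrix.vecHead, Matrix.vecTail] <;>
    (try field_simp [he, he2, he3]) <;> (try simp only [hkey]) <;>
    (try field_simp) <;> (try ring) <;>
    (simp only [Real.exp_neg, show y 0 * 2 = y 0 + y 0 by ring, Real.exp_add]; field_simp) <;> ring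

theorem stmt_10 (q v : ℝ) (hq : q ≠ 0) (hv : v ≠ 0) :
    ∀ (l k i j : Fin 3) (y : Fin 3 → ℝ), riemann (G41 q v) l k i j y = 0 := by
  intro l k i j y
  have hC : ∀ a b c : Fin 3, christoffel (G41 q v) a b c = fun y => Gam q v a b c (y 0) :=
    fun a b c => funext fun y => christoffel_eq q v hq hv a b c y
  have hE : ∀ t : ℝ, exp t ≠ 0 := Real.exp_ne_zero
  have he : ∀ t : ℝ, exp (-t) = (exp t)⁻¹ := fun t => Real.exp_neg t
  unfold riemann
  simp only [hC, Fin.sum_univ_three]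
  fin_cases l <;> fin_cases k <;> fin_cases i <;> fin_cases j <;>
    simp [Gam, pd_const, pd_e, pd_xe, pd_x, pd_b, Pi.single_apply] <;>
    (try field_simp [he]) <;> (try ring) <;>
      (simp only [Real.exp_neg, show y 0 * 2 = y 0 + y 0 by ring, Real.exp_add]; field_simp) <;> ring
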